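/- arXiv:2602.21068 — 2 statements merged into one kernel-verified Lean document; each statement's English description precedes it below -/
import Mathlib

section
/- In a rooted tree with the stopping rule, the family-wise error rate—the probability that at least one node in a set H₀ of true-null nodes is rejected—is bounded by the sum over i ∈ H₀ of αᵢ times the product of θⱼ over proper ancestors j of i. -/
/-!
Every rejection event `R i` lies inside the event `A i` that all proper ancestors of `i` are
rejected, so `μ (R i) ≤ θ i * μ (A i)`. If `m` is the parent of `i` (its deepest proper
ancestor), the stopping rule gives `A i = R m`, and iterating up the path to the root turns
`μ (A i)` into at most the product of the `θ j` over the proper ancestors of `i`. A union bound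
over `H₀` together with `θ i ≤ α i` finishes the proof.
-/

open MeasureTheory ProbabilityTheory

lemma measure_le_cond_mul_of_subset {Ω : Type*} [MeasurableSpace Ω] (μ : Measure Ω)
    [IsFiniteMeasure μ] {s t : Set Ω} (hts : t ⊆ s) : μ t ≤ μ[t|s] * μ s := by
  rcases eq_or_ne (μ s) 0 with hs | hs
  · simp [measure_mono_null hts hs]
  · rw [ProbabilityTheory.cond, Measure.smul_apply, Measure.restrict_eq_self μ hts, smul_eq_mul, mul_comm,
      ← mul_assoc, ENNReal.mul_inv_cancel hs (measure_ne_top μ s), one_mul]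

/-- The proper ancestors of a node form a finite chain; its deepest element is the parent. -/
lemma Finset.exists_mem_eq_insert_of_nonempty {ι : Type*} [DecidableEq ι] {anc : ι → Finset ι}
    (hirr : ∀ j, j ∉ anc j) (htrans : ∀ j l, j ∈ anc l → anc j ⊆ anc l)
    (hchain : ∀ i j l, j ∈ anc i → l ∈ anc i → j = l ∨ j ∈ anc l ∨ l ∈ anc j)
    {i : ι} (hi : (anc i).Nonempty) : ∃ m ∈ anc i, anc i = insert m (anc m) := by
  obtain ⟨m, hm, hmax⟩ := (anc i).exists_max_image (fun j => (anc j).card) hi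
  have hdeepest : ∀ j ∈ anc i, m ∉ anc j := fun j hj hmj =>
    (hmax j hj).not_gt (card_lt_card ⟨htrans m j hmj, fun h => hirr m (h hmj)⟩)
  refine ⟨m, hm, Subset.antisymm (fun j hj => ?_) (insert_subset hm (htrans m i hm))⟩
  rcases hchain i j m hj hm with rfl | hjm | hmj
  · exact mem_insert_self _ _
  · exact mem_insert_of_mem hjm
  · exact absurd hmj (hdeepest j hj)

theorem measure_setOf_forall_anc_le_prod_cond {Ω ι : Type*} [MeasurableSpace Ω]
    (μ : Measure Ω) [IsProbabilityMeasure μ] (anc : ι → Finset ι) (R : ι → Set Ω)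
    (hirr : ∀ j, j ∉ anc j) (htrans : ∀ j l, j ∈ anc l → anc j ⊆ anc l)
    (hchain : ∀ i j l, j ∈ anc i → l ∈ anc i → j = l ∨ j ∈ anc l ∨ l ∈ anc j)
    (hstop : ∀ l, R l ⊆ {ω | ∀ j ∈ anc l, ω ∈ R j}) (i : ι) :
    μ {ω | ∀ l ∈ anc i, ω ∈ R l} ≤ ∏ j ∈ anc i, μ[R j | {ω | ∀ l ∈ anc j, ω ∈ R l}] := by
  classical
  rcases (anc i).eq_empty_or_nonempty with h | h
  · simp [h]
  obtain ⟨m, hm, hparent⟩ := Finset.exists_mem_eq_insert_of_nonempty hirr htrans hchain h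
  have hcard : (anc m).card < (anc i).card := by
    rw [hparent, Finset.card_insert_of_notMem (hirr m)]
    exact Nat.lt_succ_self _
  have hAi : {ω | ∀ l ∈ anc i, ω ∈ R l} = R m := by
    ext ω
    simp only [hparent, Finset.forall_mem_insert, Set.mem_ofPred_eq]
    exact ⟨And.left, fun hω => ⟨hω, hstop m hω⟩⟩
  calc μ {ω | ∀ l ∈ anc i, ω ∈ R l} = μ (R m) := by rw [hAi]
    _ ≤ μ[R m | {ω | ∀ l ∈ anc m, ω ∈ R l}] * μ {ω | ∀ l ∈ anc m, ω ∈ R l} :=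
      measure_le_cond_mul_of_subset μ (hstop m)
    _ ≤ μ[R m | {ω | ∀ l ∈ anc m, ω ∈ R l}] *
          ∏ j ∈ anc m, μ[R j | {ω | ∀ l ∈ anc j, ω ∈ R l}] :=
      mul_le_mul_right
        (measure_setOf_forall_anc_le_prod_cond μ anc R hirr htrans hchain hstop m) _
    _ = ∏ j ∈ anc i, μ[R j | {ω | ∀ l ∈ anc j, ω ∈ R l}] := by
      rw [hparent, Finset.prod_insert (hirr m)]
termination_by (anc i).card

theorem stmt_5_general {Ω ι : Type*} [MeasurableSpace Ω]
    (μ : Measure Ω) [IsProbabilityMeasure μ]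
    (anc : ι → Finset ι)         -- proper ancestors of each node
    (R : ι → Set Ω)              -- rejection events
    (H₀ : Finset ι)              -- nodes whose null hypothesis is true
    (α : ι → ENNReal)
    -- tree structure: `anc` is irreflexive, transitively closed, and the ancestors
    -- of any node form a chain
    (hirr : ∀ j, j ∉ anc j)
    (htrans : ∀ j l, j ∈ anc l → anc j ⊆ anc l)
    (hchain : ∀ i j l, j ∈ anc i → l ∈ anc i → j = l ∨ j ∈ anc l ∨ l ∈ anc j)
    -- stopping rule: rejection of a node entails rejection of all of its ancestors
    (hstop : ∀ l, R l ⊆ {ω | ∀ j ∈ anc l, ω ∈ R j})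
    -- valid tests at each true null
    (hsize : ∀ i ∈ H₀, μ[R i | {ω | ∀ l ∈ anc i, ω ∈ R l}] ≤ α i) :
    μ (⋃ i ∈ H₀, R i) ≤
      ∑ i ∈ H₀, α i * ∏ j ∈ anc i, μ[R j | {ω | ∀ l ∈ anc j, ω ∈ R l}] :=
  calc μ (⋃ i ∈ H₀, R i) ≤ ∑ i ∈ H₀, μ (R i) := measure_biUnion_finset_le H₀ R
    _ ≤ ∑ i ∈ H₀, α i * ∏ j ∈ anc i, μ[R j | {ω | ∀ l ∈ anc j, ω ∈ R l}] :=
      Finset.sum_le_sum fun i hi => (measure_le_cond_mul_of_subset μ (hstop i)).trans <|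
        mul_le_mul' (hsize i hi)
          (measure_setOf_forall_anc_le_prod_cond μ anc R hirr htrans hchain hstop i)

/-- FWER bound for sequential tree testing: the probability that at least one
true-null node in `H₀` is rejected is bounded by the sum over `i ∈ H₀` of `αᵢ`
times the product of the conditional rejection probabilities `θⱼ` over the proper
ancestors `j` of `i`. -/
theorem stmt_5 {Ω ι : Type*} [MeasurableSpace Ω] [Fintype ι] [DecidableEq ι]
    (μ : Measure Ω) [IsProbabilityMeasure μ]
    (anc : ι → Finset ι)         -- proper ancestors of each node
    (R : ι → Set Ω)              -- rejection events
    (H₀ : Finset ι)              -- nodes whose null hypothesis is true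
    (α : ι → ENNReal)
    -- tree structure: `anc` is irreflexive, transitively closed, and the ancestors
    -- of any node form a chain
    (hirr : ∀ j, j ∉ anc j)
    (htrans : ∀ j l, j ∈ anc l → anc j ⊆ anc l)
    (hchain : ∀ i j l, j ∈ anc i → l ∈ anc i → j = l ∨ j ∈ anc l ∨ l ∈ anc j)
    -- stopping rule: rejection of a node entails rejection of all of its ancestors
    (hstop : ∀ l, R l ⊆ {ω | ∀ j ∈ anc l, ω ∈ R j})
    -- conditioning events have positive probability
    (hpos : ∀ j, μ {ω | ∀ l ∈ anc j, ω ∈ R l} ≠ 0)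
    -- valid tests at each true null
    (hsize : ∀ i ∈ H₀, μ[R i | {ω | ∀ l ∈ anc i, ω ∈ R l}] ≤ α i) :
    μ (⋃ i ∈ H₀, R i) ≤
      ∑ i ∈ H₀, α i * ∏ j ∈ anc i, μ[R j | {ω | ∀ l ∈ anc j, ω ∈ R l}] :=
  stmt_5_general μ anc R H₀ α hirr htrans hchain hstop hsize
end

section
/- Under the adaptive adjustment α_ℓ^{adj} = α/(k^{ℓ-1} ∏_{j=1}^{ℓ-1} θ̂ⱼ) with non-underestimated powers, the total FWER upper bound from exposed nulls, ∑_{ℓ=2}^L e_ℓ · (α/k^{ℓ-1}), is at most α, where e_ℓ = k·m_{ℓ-1} - m_ℓ, m₁ ≤ 1, and m_ℓ, e_ℓ ≥ 0. -/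
open Finset

/-! With `g j = α m_{j+1} / k^j`, the `ℓ`-th summand is `g (ℓ-2) - g (ℓ-1)`, so the sum telescopes to
`α m₁ - α m_L / k^{L-1} ≤ α m₁ ≤ α`. -/

theorem sum_Icc_two_sub_div_pow_eq {K : Type*} [Field K] {k : K} (hk : k ≠ 0) (α : K)
    (a : ℕ → K) {L : ℕ} (hL : 1 ≤ L) :
    ∑ ℓ ∈ Icc 2 L, (k * a (ℓ - 1) - a ℓ) * α / k ^ (ℓ - 1) = α * a 1 - α * a L / k ^ (L - 1) := by
  obtain ⟨n, rfl⟩ := Nat.exists_eq_add_of_le' hL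
  set g : ℕ → K := fun j ↦ α * a (j + 1) / k ^ j
  have hterm (j : ℕ) : (k * a (j + 1) - a (j + 2)) * α / k ^ (j + 1) = -(g (j + 1) - g j) := by
    simp only [g]
    field_simp
    ring
  rw [← Ico_add_one_right_eq_Icc, sum_Ico_eq_sum_range]
  simp only [Nat.add_sub_cancel, add_comm 2, Nat.reduceSubDiff, hterm, sum_neg_distrib,
    sum_range_sub]
  simp [g]

theorem stmt_10_general (k L : ℕ) (hk : 1 ≤ k) (hL : 2 ≤ L)
    (α : ℝ) (hα : 0 ≤ α)
    (m : ℕ → ℕ) (hm1 : m 1 ≤ 1) :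
    ∑ ℓ ∈ Icc 2 L, ((k : ℝ) * m (ℓ - 1) - m ℓ) * α / (k : ℝ) ^ (ℓ - 1) ≤ α := by
  have hk0 : (k : ℝ) ≠ 0 := Nat.cast_ne_zero.mpr (by omega)
  rw [sum_Icc_two_sub_div_pow_eq hk0 α (fun ℓ ↦ (m ℓ : ℝ)) (by omega)]
  have htail : 0 ≤ α * m L / (k : ℝ) ^ (L - 1) := by positivity
  have hhead : α * m 1 ≤ α := mul_le_of_le_one_right hα (by exact_mod_cast hm1)
  linarith

/-- Under the adaptive adjustment, the total FWER upper bound from exposed nulls,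
`∑_{ℓ=2}^L e_ℓ · (α / k^{ℓ-1})` with `e_ℓ = k·m_{ℓ-1} - m_ℓ ≥ 0` and `m₁ ≤ 1`,
is at most `α`. -/
theorem stmt_10 (k L : ℕ) (hk : 1 ≤ k) (hL : 2 ≤ L)
    (α : ℝ) (hα : 0 ≤ α)
    (m : ℕ → ℕ) (hm1 : m 1 ≤ 1)
    (he : ∀ ℓ, 2 ≤ ℓ → ℓ ≤ L → m ℓ ≤ k * m (ℓ - 1)) :
    ∑ ℓ ∈ Icc 2 L, ((k : ℝ) * m (ℓ - 1) - m ℓ) * α / (k : ℝ) ^ (ℓ - 1) ≤ α :=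
  stmt_10_general k L hk hL α hα m hm1
end
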